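/- arXiv:2507.05102 — 4 statements merged into one kernel-verified Lean document; each statement's English description precedes it below -/
import Mathlib

section
/- Let S_{≤1} be the set of decreasing nonnegative sequences (x_i) with Σ x_i ≤ 1. If a sequence of elements x^{(n)} ∈ S_{≤1} converges pointwise (coordinatewise) to x ∈ S_{≤1}, then x^{(n)} converges to x in the ℓ² norm, i.e. Σ_{i=1}^∞ (x_i^{(n)} - x_i)² → 0 as n → ∞. -/
open Filter

lemma bound_aux (f : ℕ → ℝ) (hmono : Antitone f) (hpos : ∀ i, 0 ≤ f i)
    (hsum : Summable f) (h1 : ∑' i, f i ≤ 1) (i : ℕ) : f i ≤ 1 / (i + 1) := by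
  rw [le_div_iff₀ (by positivity)]
  have : f i * (i + 1) ≤ ∑ j ∈ Finset.range (i + 1), f j := by
    calc f i * (i + 1) = ∑ j ∈ Finset.range (i + 1), f i := by
          simp [Finset.sum_const, mul_comm]
      _ ≤ ∑ j ∈ Finset.range (i + 1), f j :=
          Finset.sum_le_sum fun j hj => hmono (Nat.le_of_lt_succ (Finset.mem_range.mp hj))
  exact this.trans ((Summable.sum_le_tsum _ (fun j _ => hpos j) hsum).trans h1)

theorem stmt2 (x : ℕ → ℕ → ℝ) (y : ℕ → ℝ)
    (hmono : ∀ n, Antitone (x n)) (hpos : ∀ n i, 0 ≤ x n i)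
    (hsum : ∀ n, Summable (x n)) (h1 : ∀ n, ∑' i, x n i ≤ 1)
    (hymono : Antitone y) (hypos : ∀ i, 0 ≤ y i)
    (hysum : Summable y) (hy1 : ∑' i, y i ≤ 1)
    (hpt : ∀ i, Tendsto (fun n => x n i) atTop (nhds (y i))) :
    Tendsto (fun n => ∑' i, (x n i - y i) ^ 2) atTop (nhds 0) := by
  have hb : Summable (fun i : ℕ => (1 / ((i : ℝ) + 1)) ^ 2) := by
    have := (summable_nat_add_iff 1).mpr (Real.summable_one_div_nat_pow.mpr one_lt_two)
    apply this.congr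
    intro i
    push_cast
    rw [div_pow, one_pow]
  have key := tendsto_tsum_of_dominated_convergence (f := fun n i => (x n i - y i) ^ 2)
    (g := fun _ => (0 : ℝ)) (𝓕 := atTop) hb
    (fun i => by
      have := ((hpt i).sub (tendsto_const_nhds (x := y i))).pow 2
      simpa using this)
    (Eventually.of_forall fun n i => by
      have hx := bound_aux (x n) (hmono n) (hpos n) (hsum n) (h1 n) i
      have hy := bound_aux y hymono hypos hysum hy1 i
      have h0 : (0:ℝ) ≤ 1 / ((i:ℝ) + 1) := by positivity
      rw [Real.norm_eq_abs, abs_of_nonneg (sq_nonneg _)]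
      apply sq_le_sq'
      · linarith [hpos n i, hypos i]
      · linarith [hpos n i, hypos i])
  simpa using key
end

section
/- Define the partial order ⪯ on S by: (y_i) ⪯ (x_i) iff there exists a function α : ℕ → ℕ such that Σ_{j : α(j)=i} y_j ≤ x_i for all i. Suppose (y_j) ⪯ (x_i) with witness α, and for each i let Y_i := sup{y_j : α(j) = i} (interpreted as 0 if α⁻¹(i) is empty). Then Σ_{i=1}^∞ x_i (x_i − Y_i) ≤ Σ_{i=1}^∞ x_i² − Σ_{j=1}^∞ y_j². In particular Σ_j y_j² ≤ Σ_i x_i². -/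
theorem stmt6 (x y : ℕ → ℝ) (hxmono : Antitone x) (hxpos : ∀ i, 0 ≤ x i)
    (hymono : Antitone y) (hypos : ∀ j, 0 ≤ y j)
    (hx2 : Summable (fun i => (x i) ^ 2)) (hy : Summable y)
    (α : ℕ → ℕ) (hα : ∀ i, ∑' j : {j // α j = i}, y j ≤ x i) :
    (∑' i, x i * (x i - ⨆ j : {j // α j = i}, y j)
        ≤ (∑' i, (x i) ^ 2) - ∑' j, (y j) ^ 2) ∧
    ∑' j, (y j) ^ 2 ≤ ∑' i, (x i) ^ 2 := by
  set Y : ℕ → ℝ := fun i => ⨆ j : {j // α j = i}, y j with hYdef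
  have hY0 : ∀ i, 0 ≤ Y i := fun i => Real.iSup_nonneg fun j => hypos j
  have hYx : ∀ i, Y i ≤ x i := by
    intro i
    refine Real.iSup_le (fun j => ?_) (hxpos i)
    exact le_trans (Summable.le_tsum (hy.subtype _) j (fun _ _ => hypos _)) (hα i)
  have hy2 : Summable (fun j => (y j) ^ 2) := by
    refine Summable.of_nonneg_of_le (fun j => sq_nonneg _) (fun j => ?_) (hy.mul_left (y 0))
    rw [sq]
    exact mul_le_mul_of_nonneg_right (hymono (Nat.zero_le j)) (hypos j)
  have hxY : Summable (fun i => x i * Y i) := by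
    refine Summable.of_nonneg_of_le (fun i => mul_nonneg (hxpos i) (hY0 i)) (fun i => ?_) hx2
    rw [sq]
    exact mul_le_mul_of_nonneg_left (hYx i) (hxpos i)
  have hfib : ∀ i, ∑' j : {j // α j = i}, (y j) ^ 2 ≤ x i * Y i := by
    intro i
    have hb : BddAbove (Set.range fun j : {j // α j = i} => y (j : ℕ)) := by
      refine ⟨y 0, ?_⟩
      rintro _ ⟨j, rfl⟩
      exact hymono (Nat.zero_le _)
    have h1 : ∑' j : {j // α j = i}, (y j) ^ 2 ≤ ∑' j : {j // α j = i}, Y i * y j := by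
      refine Summable.tsum_le_tsum (fun j => ?_) (hy2.subtype _) ((hy.subtype _).mul_left _)
      rw [sq]
      exact mul_le_mul_of_nonneg_right (le_ciSup hb j) (hypos j)
    rw [tsum_mul_left] at h1
    calc ∑' j : {j // α j = i}, (y j) ^ 2 ≤ Y i * ∑' j : {j // α j = i}, y j := h1
      _ ≤ Y i * x i := mul_le_mul_of_nonneg_left (hα i) (hY0 i)
      _ = x i * Y i := mul_comm _ _
  have hfibsum : HasSum (fun i => ∑' j : α ⁻¹' {i}, (y j) ^ 2) (∑' j, (y j) ^ 2) :=
    hy2.hasSum.tsum_fiberwise α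
  have hfibeq : (fun i => ∑' j : α ⁻¹' {i}, (y j) ^ 2)
      = fun i => ∑' j : {j // α j = i}, (y j) ^ 2 := rfl
  rw [hfibeq] at hfibsum
  have hkey : ∑' j, (y j) ^ 2 ≤ ∑' i, x i * Y i := by
    rw [← hfibsum.tsum_eq]
    exact Summable.tsum_le_tsum hfib hfibsum.summable hxY
  constructor
  · have heq : (fun i => x i * (x i - Y i)) = fun i => (x i) ^ 2 - x i * Y i := by
      funext i; ring
    rw [heq, Summable.tsum_sub hx2 hxY]
    exact sub_le_sub_left hkey _
  · refine hkey.trans (Summable.tsum_le_tsum (fun i => ?_) hxY hx2)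
    rw [sq]
    exact mul_le_mul_of_nonneg_left (hYx i) (hxpos i)
end

section
/- Let (x_i), (y_j) be decreasing nonnegative sequences with (y_j) ⪯ (x_i) (i.e., there is α : ℕ → ℕ with Σ_{j:α(j)=i} y_j ≤ x_i for all i). Then for every k ≥ 1, the partial sum of the k largest y's is at most that of the k largest x's: Σ_{j=1}^k y_j ≤ Σ_{i=1}^k x_i. -/
lemma aux_sum_antitone (x : ℕ → ℝ) (hxmono : Antitone x) (S : Finset ℕ) :
    ∑ i ∈ S, x i ≤ ∑ i ∈ Finset.range S.card, x i := by
  set e := S.orderEmbOfFin rfl with he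
  have hle : ∀ i : Fin S.card, (i : ℕ) ≤ e i := by
    rintro ⟨n, hn⟩
    induction n with
    | zero => exact Nat.zero_le _
    | succ m ih =>
      have hm : m < S.card := by omega
      have h1 := e.strictMono (show (⟨m, hm⟩ : Fin S.card) < ⟨m + 1, hn⟩ from by
        simp [Fin.lt_def])
      have h2 := ih hm
      simpa using Nat.lt_of_le_of_lt h2 h1
  have himg : Finset.univ.image (fun i => e i) = S := by
    apply Finset.coe_injective
    rw [Finset.coe_image, Finset.coe_univ, Set.image_univ]
    exact Finset.range_orderEmbOfFin S rfl
  have h1 : ∑ i ∈ S, x i = ∑ i : Fin S.card, x (e i) := by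
    have h := Finset.sum_image (g := fun i : Fin S.card => e i)
      (s := Finset.univ) (f := x) (fun a _ b _ h => e.injective h)
    rw [himg] at h
    simpa using h
  rw [h1, ← Fin.sum_univ_eq_sum_range]
  exact Finset.sum_le_sum (fun i _ => hxmono (hle i))

theorem stmt7 (x y : ℕ → ℝ) (hxmono : Antitone x) (hxpos : ∀ i, 0 ≤ x i)
    (hymono : Antitone y) (hypos : ∀ j, 0 ≤ y j) (hy : Summable y)
    (α : ℕ → ℕ) (hα : ∀ i, ∑' j : {j // α j = i}, y j ≤ x i) :
    ∀ k : ℕ, 1 ≤ k → ∑ j ∈ Finset.range k, y j ≤ ∑ i ∈ Finset.range k, x i := by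
  intro k hk
  set S := (Finset.range k).image α with hS
  have h1 : ∑ j ∈ Finset.range k, y j
      = ∑ i ∈ S, ∑ j ∈ (Finset.range k).filter (fun j => α j = i), y j :=
    (Finset.sum_fiberwise_of_maps_to (fun j hj => Finset.mem_image_of_mem α hj) y).symm
  have h2 : ∀ i ∈ S, ∑ j ∈ (Finset.range k).filter (fun j => α j = i), y j ≤ x i := by
    intro i _
    refine le_trans ?_ (hα i)
    have h := Summable.sum_le_tsum (f := fun j : {j // α j = i} => y j)
      (((Finset.range k).filter (fun j => α j = i)).subtype (fun j => α j = i))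
      (fun _ _ => hypos _) (hy.subtype _)
    refine le_trans (le_of_eq ?_) h
    rw [Finset.sum_subtype_of_mem]
    intro j hj; exact (Finset.mem_filter.mp hj).2
  have h3 : S.card ≤ k := le_trans Finset.card_image_le (by simp)
  calc ∑ j ∈ Finset.range k, y j ≤ ∑ i ∈ S, x i := by
        rw [h1]; exact Finset.sum_le_sum h2
    _ ≤ ∑ i ∈ Finset.range S.card, x i := aux_sum_antitone x hxmono S
    _ ≤ ∑ i ∈ Finset.range k, x i := by
        apply Finset.sum_le_sum_of_subset_of_nonneg (by simp [h3])
        intro i _ _; exact hxpos i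
end

section
/- Let (x_i), (y_j) be decreasing nonnegative sequences with (y_j) ⪯ (x_i) via α, let Y_i := sup{y_j : α(j)=i} (0 if empty), and let Q_x = Σ x_i², Q_y = Σ y_j². Then for every a > 0 and k ≥ 1, Σ_{i ≤ k, x_i ≥ a} (x_i − Y_i) ≤ a⁻¹(Q_x − Q_y) and Σ_{i ≤ k, x_i < a} (x_i − Y_i) ≤ k·a, so Σ_{i=1}^k (x_i − Y_i) ≤ a⁻¹(Q_x − Q_y) + k·a. -/
open Finset

theorem stmt9 (x y : ℕ → ℝ) (hxmono : Antitone x) (hxpos : ∀ i, 0 ≤ x i)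
    (hymono : Antitone y) (hypos : ∀ j, 0 ≤ y j) (hy : Summable y)
    (hx2 : Summable (fun i => (x i) ^ 2)) (hy2 : Summable (fun j => (y j) ^ 2))
    (α : ℕ → ℕ) (hα : ∀ i, ∑' j : {j // α j = i}, y j ≤ x i)
    (Y : ℕ → ℝ) (hY : ∀ i, Y i = ⨆ j : {j // α j = i}, y j)
    (hYx : ∀ i, Y i ≤ x i)
    (a : ℝ) (ha : 0 < a) (k : ℕ) (hk : 1 ≤ k) :
    (∑ i ∈ (range k).filter (fun i => a ≤ x i), (x i - Y i)
        ≤ a⁻¹ * ((∑' i, (x i) ^ 2) - ∑' j, (y j) ^ 2)) ∧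
    (∑ i ∈ (range k).filter (fun i => x i < a), (x i - Y i) ≤ k * a) ∧
    ∑ i ∈ range k, (x i - Y i)
      ≤ a⁻¹ * ((∑' i, (x i) ^ 2) - ∑' j, (y j) ^ 2) + k * a := by
  have hyfib : ∀ i, Summable (fun j : {j // α j = i} => y j) := fun i => hy.subtype _
  have hy2fib : ∀ i, Summable (fun j : {j // α j = i} => (y j) ^ 2) := fun i => hy2.subtype _
  have hbdd : ∀ i, BddAbove (Set.range fun j : {j // α j = i} => y j) := by
    intro i
    refine ⟨x i, ?_⟩
    rintro v ⟨j, rfl⟩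
    exact (Summable.le_tsum (hyfib i) j (fun _ _ => hypos _)).trans (hα i)
  have hYle : ∀ i (j : {j // α j = i}), y j ≤ Y i := by
    intro i j; rw [hY i]; exact le_ciSup (hbdd i) j
  have hYpos : ∀ i, 0 ≤ Y i := by
    intro i
    rcases isEmpty_or_nonempty {j // α j = i} with h | h
    · rw [hY i, Real.iSup_of_isEmpty]
    · exact (hypos _).trans (hYle i h.some)
  set T : ℕ → ℝ := fun i => ∑' j : {j // α j = i}, (y j) ^ 2 with hT
  have hTfib : HasSum T (∑' j, (y j) ^ 2) := by
    have := hy2.hasSum.tsum_fiberwise α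
    convert this using 2
    all_goals rfl
  have hTsummable : Summable T := hTfib.summable
  have hTtsum : ∑' i, T i = ∑' j, (y j) ^ 2 := hTfib.tsum_eq
  have key : ∀ i, T i ≤ Y i * x i := by
    intro i
    calc T i ≤ ∑' j : {j // α j = i}, Y i * y j := by
          refine Summable.tsum_le_tsum ?_ (hy2fib i) ((hyfib i).mul_left _)
          intro j; rw [sq]; exact mul_le_mul_of_nonneg_right (hYle i j) (hypos j)
      _ = Y i * ∑' j : {j // α j = i}, y j := tsum_mul_left
      _ ≤ Y i * x i := mul_le_mul_of_nonneg_left (hα i) (hYpos i)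
  have hterm : ∀ i, x i * (x i - Y i) ≤ x i ^ 2 - T i := by
    intro i
    have := key i
    nlinarith [hxpos i]
  have hnonneg : ∀ i, 0 ≤ x i ^ 2 - T i := by
    intro i
    have h1 := hterm i
    have h2 : 0 ≤ x i * (x i - Y i) :=
      mul_nonneg (hxpos i) (sub_nonneg.2 (hYx i))
    linarith
  have hsub : Summable (fun i => x i ^ 2 - T i) := hx2.sub hTsummable
  have hsubtsum : ∑' i, (x i ^ 2 - T i) = (∑' i, (x i) ^ 2) - ∑' j, (y j) ^ 2 := by
    rw [Summable.tsum_sub hx2 hTsummable, hTtsum]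
  have part1 : ∑ i ∈ (range k).filter (fun i => a ≤ x i), (x i - Y i)
      ≤ a⁻¹ * ((∑' i, (x i) ^ 2) - ∑' j, (y j) ^ 2) := by
    have step : ∑ i ∈ (range k).filter (fun i => a ≤ x i), (x i - Y i)
        ≤ ∑ i ∈ (range k).filter (fun i => a ≤ x i), a⁻¹ * (x i ^ 2 - T i) := by
      refine Finset.sum_le_sum ?_
      intro i hi
      have hax : a ≤ x i := (Finset.mem_filter.1 hi).2
      have h1 : a * (x i - Y i) ≤ x i * (x i - Y i) :=
        mul_le_mul_of_nonneg_right hax (sub_nonneg.2 (hYx i))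
      have h2 := hterm i
      have : a * (x i - Y i) ≤ x i ^ 2 - T i := le_trans h1 h2
      calc x i - Y i = a⁻¹ * (a * (x i - Y i)) := by field_simp
        _ ≤ a⁻¹ * (x i ^ 2 - T i) :=
          mul_le_mul_of_nonneg_left this (inv_nonneg.2 ha.le)
    refine step.trans ?_
    rw [← Finset.mul_sum]
    refine mul_le_mul_of_nonneg_left ?_ (inv_nonneg.2 ha.le)
    rw [← hsubtsum]
    exact Summable.sum_le_tsum _ (fun i _ => hnonneg i) hsub
  have part2 : ∑ i ∈ (range k).filter (fun i => x i < a), (x i - Y i) ≤ k * a := by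
    calc ∑ i ∈ (range k).filter (fun i => x i < a), (x i - Y i)
        ≤ ∑ _i ∈ (range k).filter (fun i => x i < a), a := by
          refine Finset.sum_le_sum ?_
          intro i hi
          have := (Finset.mem_filter.1 hi).2
          have := hYpos i
          linarith
      _ = ((range k).filter (fun i => x i < a)).card * a := by
          rw [Finset.sum_const, nsmul_eq_mul]
      _ ≤ k * a := by
          refine mul_le_mul_of_nonneg_right ?_ ha.le
          exact_mod_cast (Finset.card_filter_le _ _).trans (by simp)
  refine ⟨part1, part2, ?_⟩
  have hsplit : ∑ i ∈ range k, (x i - Y i)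
      = ∑ i ∈ (range k).filter (fun i => a ≤ x i), (x i - Y i)
        + ∑ i ∈ (range k).filter (fun i => x i < a), (x i - Y i) := by
    rw [← Finset.sum_filter_add_sum_filter_not (range k) (fun i => a ≤ x i)]
    congr 1
    apply Finset.sum_congr _ (fun _ _ => rfl)
    ext i
    simp [not_le]
  rw [hsplit]
  exact add_le_add part1 part2
end
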